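/- There exists a compact microscopic subset of ℝ of cardinality 2^ℵ₀. -/

import Mathlib

open MeasureTheory Filter

/-- `S ⊆ ℝ` is an interval. -/
def IsIntervalSet (S : Set ℝ) : Prop := S.OrdConnected

/-- A set `M ⊆ ℝ` is microscopic if for each `ε > 0` there is a sequence of intervals
`(J n)` covering `M` with `|J n| ≤ ε ^ (n + 1)` for each `n`. -/
def Microscopic (M : Set ℝ) : Prop :=
  ∀ ε : ℝ, 0 < ε → ∃ J : ℕ → Set ℝ,
    (∀ n, IsIntervalSet (J n)) ∧ M ⊆ (⋃ n, J n) ∧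
      ∀ n, volume (J n) ≤ ENNReal.ofReal (ε ^ (n + 1))

namespace MicroAux

def b (n : ℕ) : ℕ := 2 ^ (2 ^ n)

noncomputable def a (n : ℕ) : ℝ := (1/2 : ℝ) ^ b n

lemma a_pos (n : ℕ) : 0 < a n := pow_pos (by norm_num) _

lemma b_ge (n : ℕ) : n ≤ b n :=
  le_trans (Nat.le_of_lt (Nat.lt_two_pow_self (n := n))) (Nat.le_of_lt Nat.lt_two_pow_self)

lemma a_le_geom (n : ℕ) : a n ≤ (1/2:ℝ) ^ n :=
  pow_le_pow_of_le_one (by norm_num) (by norm_num) (b_ge n)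

lemma summable_a : Summable a :=
  Summable.of_nonneg_of_le (fun n => (a_pos n).le) a_le_geom
    (summable_geometric_of_lt_one (by norm_num) (by norm_num))

lemma b_two (n : ℕ) : 2 ≤ b n := by
  have : (1:ℕ) ≤ 2 ^ n := Nat.one_le_two_pow
  calc 2 = 2 ^ 1 := rfl
  _ ≤ 2 ^ (2 ^ n) := Nat.pow_le_pow_right (by norm_num) this

lemma b_succ (n : ℕ) : b (n+1) = b n ^ 2 := by
  simp [b, pow_succ, pow_mul]

lemma b_add_two (n : ℕ) : b n + 2 ≤ b (n+1) := by
  rw [b_succ]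
  have h := b_two n
  nlinarith

lemma b_add (k j : ℕ) : b k + j ≤ b (k + j) := by
  induction j with
  | zero => simp
  | succ j ih =>
    have h1 := b_add_two (k + j)
    have h2 : k + (j+1) = (k+j)+1 := by omega
    rw [h2]
    omega

noncomputable def t (k : ℕ) : ℝ := ∑' i, a (i + k)

lemma summable_a_shift (k : ℕ) : Summable fun i => a (i + k) :=
  (summable_nat_add_iff k).2 summable_a

lemma t_le (k : ℕ) : t k ≤ 2 * a k := by
  have h1 : ∀ i, a (i + k) ≤ a k * (1/2:ℝ) ^ i := by
    intro i
    have hb : b k + i ≤ b (i + k) := by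
      have := b_add k i; rwa [Nat.add_comm k i] at this
    calc a (i + k) ≤ (1/2:ℝ) ^ (b k + i) :=
      pow_le_pow_of_le_one (by norm_num) (by norm_num) hb
    _ = a k * (1/2:ℝ)^i := by rw [pow_add]; rfl
  have h2 : Summable fun i => a k * (1/2:ℝ)^i :=
    (summable_geometric_of_lt_one (by norm_num) (by norm_num)).mul_left _
  calc t k ≤ ∑' i, a k * (1/2:ℝ)^i := Summable.tsum_le_tsum h1 (summable_a_shift k) h2
  _ = a k * 2 := by
      rw [tsum_mul_left, tsum_geometric_of_lt_one (by norm_num) (by norm_num)]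
      norm_num
  _ = 2 * a k := by ring

lemma t_nonneg (k : ℕ) : 0 ≤ t k :=
  tsum_nonneg fun i => (a_pos _).le

noncomputable def g (y : ℕ → Bool) (n : ℕ) : ℝ := if y n then a n else 0

lemma g_nonneg (y : ℕ → Bool) (n : ℕ) : 0 ≤ g y n := by
  unfold g; split <;> simp [(a_pos n).le]

lemma g_le_a (y : ℕ → Bool) (n : ℕ) : g y n ≤ a n := by
  unfold g; split
  · exact le_rfl
  · exact (a_pos n).le

lemma summable_g (y : ℕ → Bool) : Summable (g y) :=
  Summable.of_nonneg_of_le (g_nonneg y) (g_le_a y) summable_a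

noncomputable def f (y : ℕ → Bool) : ℝ := ∑' n, g y n

lemma continuous_f : Continuous f := by
  apply continuous_tsum (u := a)
  · intro n
    exact Continuous.comp (continuous_of_discreteTopology
      (f := fun v : Bool => if v then a n else 0)) (continuous_apply n)
  · exact summable_a
  · intro n y
    rw [Real.norm_eq_abs, abs_of_nonneg (g_nonneg y n)]
    exact g_le_a y n


lemma f_split (y : ℕ → Bool) (k : ℕ) :
    f y = (∑ i ∈ Finset.range k, g y i) + ∑' i, g y (i + k) :=
  ((Summable.sum_add_tsum_nat_add k (summable_g y)).symm)

lemma tail_le_t (y : ℕ → Bool) (k : ℕ) : ∑' i, g y (i + k) ≤ t k :=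
  Summable.tsum_le_tsum (fun i => g_le_a y _)
    ((summable_nat_add_iff k).2 (summable_g y)) (summable_a_shift k)

lemma tail_nonneg (y : ℕ → Bool) (k : ℕ) : 0 ≤ ∑' i, g y (i + k) :=
  tsum_nonneg fun i => g_nonneg y _

lemma two_a_lt (n : ℕ) : 2 * a (n+1) < a n := by
  have hb := b_add_two n
  have h : a (n+1) ≤ (1/2:ℝ) ^ (b n + 2) :=
    pow_le_pow_of_le_one (by norm_num) (by norm_num) hb
  have h2 : (1/2:ℝ) ^ (b n + 2) = a n / 4 := by
    rw [pow_add]; unfold a; ring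
  have := a_pos n
  nlinarith

lemma key (y z : ℕ → Bool) (n : ℕ) (he : ∀ i < n, y i = z i)
    (hy : y n = true) (hz : z n = false) : f z < f y := by
  have hsum : ∑ i ∈ Finset.range n, g y i = ∑ i ∈ Finset.range n, g z i := by
    apply Finset.sum_congr rfl
    intro i hi
    rw [Finset.mem_range] at hi
    unfold g; rw [he i hi]
  have hy' : g y n = a n := by unfold g; rw [hy]; simp
  have hz' : g z n = 0 := by unfold g; rw [hz]; simp
  have e1 : f y = (∑ i ∈ Finset.range n, g y i) + a n + ∑' i, g y (i + (n+1)) := by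
    rw [f_split y (n+1), Finset.sum_range_succ, hy']
  have e2 : f z = (∑ i ∈ Finset.range n, g z i) + ∑' i, g z (i + (n+1)) := by
    rw [f_split z (n+1), Finset.sum_range_succ, hz', add_zero]
  have h3 : ∑' i, g z (i + (n+1)) < a n :=
    lt_of_le_of_lt (le_trans (tail_le_t z (n+1)) (t_le (n+1))) (two_a_lt n)
  have h4 := tail_nonneg y (n+1)
  rw [e1, e2, hsum]
  linarith

lemma f_injective : Function.Injective f := by
  intro y z hfz
  by_contra hne
  have hex : ∃ n, y n ≠ z n := by
    by_contra h
    push_neg at h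
    exact hne (funext h)
  set n := Nat.find hex with hn
  have hne' : y n ≠ z n := Nat.find_spec hex
  have hmin : ∀ i < n, y i = z i := fun i hi => by
    have := Nat.find_min hex hi
    simpa using this
  cases hy : y n <;> cases hz : z n
  · rw [hy, hz] at hne'; exact hne' rfl
  · exact absurd hfz (ne_of_lt (key z y n (fun i hi => (hmin i hi).symm) hz hy))
  · exact absurd hfz.symm (ne_of_lt (key y z n hmin hy hz))
  · rw [hy, hz] at hne'; exact hne' rfl

lemma card_range : Cardinal.mk ↥(Set.range f) = 2 ^ Cardinal.aleph0 := by
  rw [Cardinal.mk_range_eq f f_injective]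
  simp [Cardinal.mk_arrow]


lemma f_nonneg (y : ℕ → Bool) : 0 ≤ f y := tsum_nonneg (g_nonneg y)

lemma f_le_one (y : ℕ → Bool) : f y ≤ 1 := by
  have h1 : f y ≤ ∑' n, a n := Summable.tsum_le_tsum (g_le_a y) (summable_g y) summable_a
  have h2 : (∑' n, a n) = t 0 := by unfold t; simp
  have h3 := t_le 0
  have h4 : a 0 = 1/4 := by unfold a b; norm_num
  linarith

lemma f_mem_Icc (y : ℕ → Bool) : f y ∈ Set.Icc (0:ℝ) 1 := ⟨f_nonneg y, f_le_one y⟩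

lemma two_mul_le_two_pow (m : ℕ) : 2 * m ≤ 2 ^ m := by
  induction m with
  | zero => simp
  | succ n ih =>
    rcases Nat.eq_zero_or_pos n with h | h
    · subst h; norm_num
    · have h2 : 2 ≤ 2 ^ n := by
        calc 2 = 2^1 := rfl
        _ ≤ 2^n := Nat.pow_le_pow_right (by norm_num) h
      calc 2*(n+1) = 2*n + 2 := by ring
      _ ≤ 2^n + 2^n := Nat.add_le_add ih h2
      _ = 2^(n+1) := by ring

lemma mul_lt_b (m : ℕ) : m * 2^m + 1 ≤ b m := by
  have h1 : m < 2^m := Nat.lt_two_pow_self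
  have h2 : m * 2^m < 2^m * 2^m :=
    Nat.mul_lt_mul_of_lt_of_le h1 le_rfl (Nat.pow_pos (by norm_num))
  have h3 : (2:ℕ)^m * 2^m = 2^(2*m) := by rw [two_mul, pow_add]
  have h4 : (2:ℕ)^(2*m) ≤ 2^(2^m) := Nat.pow_le_pow_right (by norm_num) (two_mul_le_two_pow m)
  unfold b; omega

lemma t_le_eps (ε : ℝ) (m : ℕ) (hm : (1/2:ℝ)^m ≤ ε) : t m ≤ ε ^ (2^m) := by
  have hb := mul_lt_b m
  have h1 : a m ≤ (1/2:ℝ)^(m*2^m+1) :=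
    pow_le_pow_of_le_one (by norm_num) (by norm_num) hb
  have h2 : (2:ℝ) * (1/2:ℝ)^(m*2^m+1) = ((1/2:ℝ)^m)^(2^m) := by
    rw [pow_succ, ← pow_mul]; ring
  have h3 : ((1/2:ℝ)^m)^(2^m) ≤ ε ^ (2^m) := pow_le_pow_left₀ (by positivity) hm _
  have h4 := t_le m
  linarith

noncomputable def c (k : ℕ) (s : Fin k → Bool) : ℝ := ∑ i, if s i then a (i:ℕ) else 0

lemma c_eq (k : ℕ) (y : ℕ → Bool) :
    c k (fun i => y i) = ∑ i ∈ Finset.range k, g y i := by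
  unfold c g
  exact Fin.sum_univ_eq_sum_range (fun i => if y i then a i else 0) k

lemma f_mem (k : ℕ) (y : ℕ → Bool) :
    f y ∈ Set.Icc (c k fun i => y i) ((c k fun i => y i) + t k) := by
  constructor
  · rw [c_eq, f_split y k]; have := tail_nonneg y k; linarith
  · rw [c_eq, f_split y k]; have := tail_le_t y k; linarith

end MicroAux

theorem exists_compact_microscopic_of_cardinality_continuum :
    ∃ K : Set ℝ, IsCompact K ∧ Microscopic K ∧ Cardinal.mk ↥K = 2 ^ Cardinal.aleph0 := by
  refine ⟨Set.range MicroAux.f, isCompact_range MicroAux.continuous_f, ?_, MicroAux.card_range⟩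
  intro ε hε
  rcases le_or_gt 1 ε with h1 | h1
  · refine ⟨fun n => if n = 0 then Set.Icc 0 1 else ∅, ?_, ?_, ?_⟩
    · intro n; unfold IsIntervalSet; dsimp only; split
      exacts [Set.ordConnected_Icc, Set.ordConnected_empty]
    · rintro x ⟨y, rfl⟩
      exact Set.mem_iUnion.2 ⟨0, by simpa using MicroAux.f_mem_Icc y⟩
    · intro n
      dsimp only
      split
      · rw [Real.volume_Icc]
        apply ENNReal.ofReal_le_ofReal
        have : (1:ℝ) ≤ ε ^ (n+1) := one_le_pow₀ h1
        linarith
      · simp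
  · obtain ⟨m, hm⟩ := exists_pow_lt_of_lt_one hε (by norm_num : (1/2:ℝ) < 1)
    have ht : MicroAux.t m ≤ ε ^ (2^m) := MicroAux.t_le_eps ε m hm.le
    have ecard : Fintype.card (Fin m → Bool) = 2^m := by simp
    let e : (Fin m → Bool) ≃ Fin (2^m) := Fintype.equivFinOfCardEq ecard
    refine ⟨fun n => if h : n < 2^m then
      Set.Icc (MicroAux.c m (e.symm ⟨n, h⟩)) (MicroAux.c m (e.symm ⟨n, h⟩) + MicroAux.t m)
      else ∅, ?_, ?_, ?_⟩
    · intro n; unfold IsIntervalSet; dsimp only; split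
      exacts [Set.ordConnected_Icc, Set.ordConnected_empty]
    · rintro x ⟨y, rfl⟩
      refine Set.mem_iUnion.2 ⟨(e fun i : Fin m => y i).val, ?_⟩
      have hlt : (e fun i : Fin m => y i).val < 2^m := (e _).isLt
      rw [dif_pos hlt]
      have hsymm : e.symm ⟨(e fun i : Fin m => y i).val, hlt⟩ = fun i : Fin m => y i := by
        simp
      rw [hsymm]
      exact MicroAux.f_mem m y
    · intro n
      dsimp only
      split
      · rename_i h
        rw [Real.volume_Icc, add_sub_cancel_left]
        apply ENNReal.ofReal_le_ofReal
        calc MicroAux.t m ≤ ε ^ (2^m) := ht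
        _ ≤ ε ^ (n+1) := pow_le_pow_of_le_one hε.le h1.le (by omega : n+1 ≤ 2^m)
      · simp
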